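/- arXiv:1805.04197 — 2 statements merged into one kernel-verified Lean document; each statement's English description precedes it below -/
import Mathlib

section
/- Suppose x : ℤ² → ℂ satisfies Q(x,v) = 0 for every unit square, i.e., for all v ∈ ℤ². Then for every v ∈ ℤ²: (∏_{ε∈{−1,1}²} Qv(x,ε))² = E(x,v)². Moreover the following strengthening holds: (Qv(x,(1,1))·Qv(x,(−1,−1)))² = (Qv(x,(1,−1))·Qv(x,(−1,1)))² = E(x,v). -/
open Finset

noncomputable section

abbrev Z2 := ℤ × ℤ

/-- The 4 sign vectors in {-1,1}². -/
def signs2 : Finset Z2 := ({-1, 1} : Finset ℤ) ×ˢ ({-1, 1} : Finset ℤ)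

/-- The expression `Q^C` for the unit square with bottom-left corner `v`. -/
def Q2 (x : Z2 → ℂ) (v : Z2) : ℂ :=
  let z00 := x v
  let z10 := x (v + (1,0))
  let z01 := x (v + (0,1))
  let z11 := x (v + (1,1))
  z00^2 + z10^2 + z01^2 + z11^2
    - 2 * (z00 * z10 + z10 * z11 + z11 * z01 + z01 * z00)
    - 6 * (z00 * z11 + z10 * z01)

/-- The corner derivative `Q^C_v` for the square containing `v` and `v + ε`. -/
def cornerQ (x : Z2 → ℂ) (v ε : Z2) : ℂ :=
  (1 / (2 * (Real.sqrt 2 : ℂ))) *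
    (x (v + ε) - x (v + (ε.1, 0)) - x (v + (0, ε.2)) - 3 * x v)

/-- The product over the 4 lattice edges incident to `v`. -/
def edgeProd (x : Z2 → ℂ) (v : Z2) : ℂ :=
  (x v + x (v + (1,0))) * (x v + x (v + (-1,0))) *
  (x v + x (v + (0,1))) * (x v + x (v + (0,-1)))

lemma hc_aux : (1 / (2 * (Real.sqrt 2 : ℂ)))^2 = 1/8 := by
  have h2 : ((Real.sqrt 2 : ℝ) : ℂ)^2 = 2 := by norm_cast; exact Real.sq_sqrt (by norm_num)
  rw [div_pow, mul_pow, h2]; norm_num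

/-- Proposition A2B2forQC. -/
theorem statement12 (x : Z2 → ℂ) (hx : ∀ v, Q2 x v = 0) (v : Z2) :
    ((∏ ε ∈ signs2, cornerQ x v ε)^2 = (edgeProd x v)^2) ∧
    ((cornerQ x v (1,1) * cornerQ x v (-1,-1))^2 = edgeProd x v) ∧
    ((cornerQ x v (1,-1) * cornerQ x v (-1,1))^2 = edgeProd x v) := by
  have h11 : cornerQ x v (1,1) ^ 2 = (x v + x (v + (1,0))) * (x v + x (v + (0,1))) := by
    have hQ := hx v
    unfold Q2 at hQ
    unfold cornerQ
    rw [mul_pow, hc_aux]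
    linear_combination hQ/8
  have hmm : cornerQ x v (-1,-1) ^ 2 = (x v + x (v + (-1,0))) * (x v + x (v + (0,-1))) := by
    have hQ := hx (v + (-1,-1))
    unfold Q2 at hQ
    rw [show v + (-1,-1) + (1,0) = v + (0,-1) from by rw [add_assoc]; norm_num [Prod.ext_iff],
        show v + (-1,-1) + (0,1) = v + (-1,0) from by rw [add_assoc]; norm_num [Prod.ext_iff],
        show v + (-1,-1) + (1,1) = v from by rw [add_assoc]; norm_num [Prod.ext_iff]] at hQ
    unfold cornerQ
    rw [mul_pow, hc_aux]
    norm_num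
    linear_combination hQ/8
  have h1m : cornerQ x v (1,-1) ^ 2 = (x v + x (v + (1,0))) * (x v + x (v + (0,-1))) := by
    have hQ := hx (v + (0,-1))
    unfold Q2 at hQ
    rw [show v + (0,-1) + (1,0) = v + (1,-1) from by rw [add_assoc]; norm_num [Prod.ext_iff],
        show v + (0,-1) + (0,1) = v from by rw [add_assoc]; norm_num [Prod.ext_iff],
        show v + (0,-1) + (1,1) = v + (1,0) from by rw [add_assoc]; norm_num [Prod.ext_iff]] at hQ
    unfold cornerQ
    rw [mul_pow, hc_aux]
    norm_num
    linear_combination hQ/8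
  have hm1 : cornerQ x v (-1,1) ^ 2 = (x v + x (v + (-1,0))) * (x v + x (v + (0,1))) := by
    have hQ := hx (v + (-1,0))
    unfold Q2 at hQ
    rw [show v + (-1,0) + (1,0) = v from by rw [add_assoc]; norm_num [Prod.ext_iff],
        show v + (-1,0) + (0,1) = v + (-1,1) from by rw [add_assoc]; norm_num [Prod.ext_iff],
        show v + (-1,0) + (1,1) = v + (0,1) from by rw [add_assoc]; norm_num [Prod.ext_iff]] at hQ
    unfold cornerQ
    rw [mul_pow, hc_aux]
    norm_num
    linear_combination hQ/8
  have G2 : (cornerQ x v (1,1) * cornerQ x v (-1,-1))^2 = edgeProd x v := by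
    rw [mul_pow, h11, hmm]; unfold edgeProd; ring
  have G3 : (cornerQ x v (1,-1) * cornerQ x v (-1,1))^2 = edgeProd x v := by
    rw [mul_pow, h1m, hm1]; unfold edgeProd; ring
  refine ⟨?_, G2, G3⟩
  have hprod : (∏ ε ∈ signs2, cornerQ x v ε)
      = cornerQ x v (-1,-1) * cornerQ x v (-1,1) * cornerQ x v (1,-1) * cornerQ x v (1,1) := by
    rw [show signs2 = {((-1:ℤ),(-1:ℤ)), (-1,1), (1,-1), (1,1)} from by decide]
    simp [Finset.prod_insert]; ring
  rw [hprod, show (cornerQ x v (-1,-1) * cornerQ x v (-1,1) * cornerQ x v (1,-1) *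
      cornerQ x v (1,1))^2 = (cornerQ x v (1,1) * cornerQ x v (-1,-1))^2 *
      (cornerQ x v (1,-1) * cornerQ x v (-1,1))^2 from by ring, G2, G3, sq]
end
end

section
/- Let (x, h, w) be an edge datum on ℤ². Then the vertex array x satisfies Q(x,v) = 0 for all v ∈ ℤ², and it satisfies the coherence condition ∏_{ε∈{−1,1}²} Qv(x,ε) = −E(x,v) for all v ∈ ℤ². -/
open Finset

noncomputable section

/-- An edge datum on ℤ²: vertex array `x` together with edge arrays `h` (at
midpoints `v+(1/2,0)`) and `w` (at midpoints `v+(0,1/2)`) satisfying the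
recurrence and the square conditions. -/
def EdgeDatum (x h w : Z2 → ℂ) : Prop :=
  ∀ v : Z2,
    (x (v + (1,1)) = 3 * x v + x (v + (1,0)) + x (v + (0,1))
        + 2 * (Real.sqrt 2 : ℂ) * h v * w v) ∧
    (h (v + (0,1)) = h v + (Real.sqrt 2 : ℂ) * w v) ∧
    (w (v + (1,0)) = w v + (Real.sqrt 2 : ℂ) * h v) ∧
    ((h v)^2 = x v + x (v + (1,0))) ∧
    ((w v)^2 = x v + x (v + (0,1)))

lemma sq2C : ((Real.sqrt 2 : ℂ))^2 = 2 := by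
  norm_cast
  rw [Real.sq_sqrt]
  norm_num

lemma sqrt2C_ne : ((Real.sqrt 2 : ℂ)) ≠ 0 := by
  simp only [ne_eq, Complex.ofReal_eq_zero]
  positivity

lemma halfinv_mul (A B : ℂ) (hAB : A = 2 * (Real.sqrt 2 : ℂ) * B) :
    (1 / (2 * (Real.sqrt 2 : ℂ))) * A = B := by
  rw [hAB]
  have := sqrt2C_ne
  field_simp

/-- Theorem coh_for_QC_theorem (b). -/
theorem statement15 (x h w : Z2 → ℂ) (hd : EdgeDatum x h w) :
    (∀ v, Q2 x v = 0) ∧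
    (∀ v : Z2, ∏ ε ∈ signs2, cornerQ x v ε = - edgeProd x v) := by
  have S : ((Real.sqrt 2 : ℂ))^2 = 2 := sq2C
  constructor
  · intro v
    obtain ⟨R, _, _, E1, E2⟩ := hd v
    unfold Q2
    simp only []
    rw [R]
    linear_combination 4 * (h v)^2 * (w v)^2 * S + 8 * (w v)^2 * E1
      + 8 * (x v + x (v + (1,0))) * E2
  · intro v
    -- corner (1,1)
    have hA : cornerQ x v (1,1) = h v * w v := by
      obtain ⟨R, _, _, _, _⟩ := hd v
      unfold cornerQ
      apply halfinv_mul
      linear_combination R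
    -- corner (1,-1)
    have hB : cornerQ x v (1,-1) = -(h v * w (v + (0,-1))) := by
      obtain ⟨R, H2, _, _, E2⟩ := hd (v + (0,-1))
      have p1 : v + (0,-1) + (1,1) = v + (1,0) := by rw [add_assoc]; rfl
      have p2 : v + (0,-1) + (1,0) = v + (1,-1) := by rw [add_assoc]; rfl
      have p3 : v + (0,-1) + (0,1) = v := by rw [add_assoc]; simp
      rw [p1, p2, p3] at R
      rw [p3] at H2
      rw [p3] at E2
      unfold cornerQ
      apply halfinv_mul
      linear_combination -R + 2 * (Real.sqrt 2 : ℂ) * w (v + (0,-1)) * H2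
        + 2 * (w (v + (0,-1)))^2 * S + 4 * E2
    -- corner (-1,1)
    have hC : cornerQ x v (-1,1) = -(w v * h (v + (-1,0))) := by
      obtain ⟨R, _, W3, E1, _⟩ := hd (v + (-1,0))
      have p1 : v + (-1,0) + (1,1) = v + (0,1) := by rw [add_assoc]; rfl
      have p2 : v + (-1,0) + (0,1) = v + (-1,1) := by rw [add_assoc]; rfl
      have p3 : v + (-1,0) + (1,0) = v := by rw [add_assoc]; simp
      rw [p1, p2, p3] at R
      rw [p3] at W3
      rw [p3] at E1
      unfold cornerQ
      apply halfinv_mul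
      linear_combination -R + 2 * (Real.sqrt 2 : ℂ) * h (v + (-1,0)) * W3
        + 2 * (h (v + (-1,0)))^2 * S + 4 * E1
    -- corner (-1,-1)
    have hD : cornerQ x v (-1,-1) = -(h (v + (-1,0)) * w (v + (0,-1))) := by
      obtain ⟨R, H2, W3, E1, E2⟩ := hd (v + (-1,-1))
      have p1 : v + (-1,-1) + (1,1) = v := by
        rw [add_assoc, show ((-1,-1) : Z2) + (1,1) = 0 from rfl, add_zero]
      have p2 : v + (-1,-1) + (1,0) = v + (0,-1) := by rw [add_assoc]; rfl
      have p3 : v + (-1,-1) + (0,1) = v + (-1,0) := by rw [add_assoc]; rfl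
      rw [p1, p2, p3] at R
      rw [p3] at H2
      rw [p2] at W3
      rw [p2] at E1
      rw [p3] at E2
      unfold cornerQ
      apply halfinv_mul
      linear_combination (-3 : ℂ) * R
        + 2 * (Real.sqrt 2 : ℂ) * w (v + (0,-1)) * H2
        + 2 * (Real.sqrt 2 : ℂ) * (h (v+(-1,-1)) + (Real.sqrt 2 : ℂ) * w (v+(-1,-1))) * W3
        + 4 * E1 + 4 * E2
        + (2 * (Real.sqrt 2 : ℂ) * h (v+(-1,-1)) * w (v+(-1,-1))
            + 2 * (h (v+(-1,-1)))^2 + 2 * (w (v+(-1,-1)))^2) * S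
    -- squares
    obtain ⟨_, _, _, Ehv, Ewv⟩ := hd v
    obtain ⟨_, _, _, Eha, _⟩ := hd (v + (-1,0))
    obtain ⟨_, _, _, _, Ewb⟩ := hd (v + (0,-1))
    have q1 : v + (-1,0) + (1,0) = v := by rw [add_assoc]; simp
    have q2 : v + (0,-1) + (0,1) = v := by rw [add_assoc]; simp
    rw [q1] at Eha
    rw [q2] at Ewb
    have Eha' : (h (v + (-1,0)))^2 = x v + x (v + (-1,0)) := by rw [Eha]; ring
    have Ewb' : (w (v + (0,-1)))^2 = x v + x (v + (0,-1)) := by rw [Ewb]; ring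
    rw [show signs2 = ({(-1,-1),(-1,1),(1,-1),(1,1)} : Finset Z2) from by decide]
    rw [Finset.prod_insert (by norm_num), Finset.prod_insert (by norm_num),
      Finset.prod_insert (by norm_num), Finset.prod_singleton]
    rw [hA, hB, hC, hD]
    unfold edgeProd
    rw [← Ehv, ← Ewv, ← Eha', ← Ewb']
    ring
end
end
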